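/- arXiv:2304.06781 — 2 statements merged into one kernel-verified Lean document; each statement's English description precedes it below -/
import Mathlib

section
/- The two 2-dimensional complex BiHom-associative trialgebras BTas₂¹ (with products e₁⊣e₂ = e₂⊣e₁ = e₂⊣e₂ = e₁, e₁⊢e₂ = e₂⊢e₁ = e₁, e₂⊥e₂ = e₁, α(e₂) = β(e₂) = e₁) and BTas₂⁵ (with products e₁⊣e₂ = e₁, e₂⊣e₂ = e₂, e₁⊢e₂ = e₁, e₂⊢e₂ = e₂, e₁⊥e₂ = e₁, e₂⊥e₂ = e₂, α(e₁) = β(e₁) = e₁, α(e₂) = e₂, β(e₂) = e₁+e₂) are not isomorphic as BiHom-associative trialgebras. -/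
/-!
An isomorphism `ψ` satisfies `ψ ∘ α = α' ∘ ψ`, so `α` is injective as soon as `α'` is.
On BTas₂⁵ the map `α'` is the identity, whereas on BTas₂¹ the map `α` kills `e₁`.
-/

noncomputable section

/-- BTas₂¹: e₁⊣e₂ = e₂⊣e₁ = e₂⊣e₂ = e₁; e₁⊢e₂ = e₂⊢e₁ = e₁; e₂⊥e₂ = e₁;
α(e₂) = β(e₂) = e₁, zero elsewhere. -/
def l1 : (Fin 2 → ℂ) → (Fin 2 → ℂ) → (Fin 2 → ℂ) :=
  fun x y => Pi.single 0 (x 0 * y 1 + x 1 * y 0 + x 1 * y 1)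
def r1 : (Fin 2 → ℂ) → (Fin 2 → ℂ) → (Fin 2 → ℂ) :=
  fun x y => Pi.single 0 (x 0 * y 1 + x 1 * y 0)
def m1 : (Fin 2 → ℂ) → (Fin 2 → ℂ) → (Fin 2 → ℂ) :=
  fun x y => Pi.single 0 (x 1 * y 1)
def al1 : (Fin 2 → ℂ) → (Fin 2 → ℂ) := fun x => Pi.single 0 (x 1)
def be1 : (Fin 2 → ℂ) → (Fin 2 → ℂ) := fun x => Pi.single 0 (x 1)

/-- BTas₂⁵: e₁•e₂ = e₁, e₂•e₂ = e₂ for all three products;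
α(e₁) = β(e₁) = e₁, α(e₂) = e₂, β(e₂) = e₁ + e₂. -/
def l5 : (Fin 2 → ℂ) → (Fin 2 → ℂ) → (Fin 2 → ℂ) :=
  fun x y => Pi.single 0 (x 0 * y 1) + Pi.single 1 (x 1 * y 1)
def r5 : (Fin 2 → ℂ) → (Fin 2 → ℂ) → (Fin 2 → ℂ) :=
  fun x y => Pi.single 0 (x 0 * y 1) + Pi.single 1 (x 1 * y 1)
def m5 : (Fin 2 → ℂ) → (Fin 2 → ℂ) → (Fin 2 → ℂ) :=
  fun x y => Pi.single 0 (x 0 * y 1) + Pi.single 1 (x 1 * y 1)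
def al5 : (Fin 2 → ℂ) → (Fin 2 → ℂ) := fun x => x
def be5 : (Fin 2 → ℂ) → (Fin 2 → ℂ) := fun x => ![x 0 + x 1, x 1]

theorem Function.Semiconj.injective_of_injective {α β : Type*} {f : α → β} {ga : α → α}
    {gb : β → β} (h : Function.Semiconj f ga gb) (hf : Function.Injective f)
    (hgb : Function.Injective gb) : Function.Injective ga :=
  fun x y hxy => hf (hgb (by rw [← h x, ← h y, hxy]))

theorem al1_not_injective : ¬ Function.Injective al1 := by
  intro h
  have h₀ : al1 (Pi.single 0 1) = al1 0 := by
    ext i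
    simp [al1]
  simpa using congrFun (h h₀) 0

theorem al5_injective : Function.Injective al5 := Function.injective_id

theorem stmt16 :
    ¬ ∃ ψ : (Fin 2 → ℂ) ≃ₗ[ℂ] (Fin 2 → ℂ),
      (∀ x, ψ (al1 x) = al5 (ψ x)) ∧ (∀ x, ψ (be1 x) = be5 (ψ x)) ∧
      (∀ x y, ψ (l1 x y) = l5 (ψ x) (ψ y)) ∧
      (∀ x y, ψ (r1 x y) = r5 (ψ x) (ψ y)) ∧
      (∀ x y, ψ (m1 x y) = m5 (ψ x) (ψ y)) := by
  rintro ⟨ψ, hα, -, -, -, -⟩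
  exact al1_not_injective
    (Function.Semiconj.injective_of_injective hα ψ.injective al5_injective)
end
end

section
/- Consider the 3-dimensional complex BiHom-associative trialgebra BTas₃³ with products e₂⊣e₃ = e₁, e₃⊣e₁ = e₁, e₃⊣e₂ = e₁; e₁⊢e₂ = e₁, e₂⊢e₃ = e₁, e₃⊢e₂ = e₁; e₁⊥e₁ = e₁, e₁⊥e₂ = e₁, e₂⊥e₃ = e₁, e₃⊥e₁ = e₁ (other basis products zero), with α(e₂) = e₂, β(e₃) = e₃ (zero on remaining basis vectors). Then the space of its αβ-derivations is 2-dimensional, spanned by the diagonal maps d₁(e₂) = e₂ and d₂(e₃) = e₃ (each zero on the other basis vectors). -/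
/-!
Since `α ∘ β = 0`, the right-hand side of every derivation identity vanishes, so an
`αβ`-derivation is exactly a linear map commuting with `α` and `β` that kills all products.
As `e₁ ⊥ e₁ = e₁` this gives `d e₁ = 0`, while commuting with `α` and `β` forces
`d e₂ ∈ ℂ e₂` and `d e₃ ∈ ℂ e₃`. Conversely all products lie in `ℂ e₁`, so every such diagonal
map is an `αβ`-derivation.
-/

noncomputable section

/-- The algebra BTas₃³ on ℂ³: products into e₁, with
e₂⊣e₃ = e₃⊣e₁ = e₃⊣e₂ = e₁; e₁⊢e₂ = e₂⊢e₃ = e₃⊢e₂ = e₁;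
e₁⊥e₁ = e₁⊥e₂ = e₂⊥e₃ = e₃⊥e₁ = e₁; α(e₂) = e₂, β(e₃) = e₃, zero elsewhere. -/
def l19 : (Fin 3 → ℂ) → (Fin 3 → ℂ) → (Fin 3 → ℂ) :=
  fun x y => Pi.single 0 (x 1 * y 2 + x 2 * y 0 + x 2 * y 1)
def r19 : (Fin 3 → ℂ) → (Fin 3 → ℂ) → (Fin 3 → ℂ) :=
  fun x y => Pi.single 0 (x 0 * y 1 + x 1 * y 2 + x 2 * y 1)
def m19 : (Fin 3 → ℂ) → (Fin 3 → ℂ) → (Fin 3 → ℂ) :=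
  fun x y => Pi.single 0 (x 0 * y 0 + x 0 * y 1 + x 1 * y 2 + x 2 * y 0)
def al19 : (Fin 3 → ℂ) → (Fin 3 → ℂ) := fun x => Pi.single 1 (x 1)
def be19 : (Fin 3 → ℂ) → (Fin 3 → ℂ) := fun x => Pi.single 2 (x 2)

/-- d₁ : e₂ ↦ e₂, zero elsewhere. -/
def D19a : (Fin 3 → ℂ) →ₗ[ℂ] (Fin 3 → ℂ) :=
  (LinearMap.single ℂ (fun _ : Fin 3 => ℂ) 1).comp (LinearMap.proj 1)
/-- d₂ : e₃ ↦ e₃, zero elsewhere. -/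
def D19b : (Fin 3 → ℂ) →ₗ[ℂ] (Fin 3 → ℂ) :=
  (LinearMap.single ℂ (fun _ : Fin 3 => ℂ) 2).comp (LinearMap.proj 2)

lemma derivation_identity_iff_of_eq_zero {V : Type*} [AddZeroClass V] (μ : V → V → V)
    (hl : ∀ y, μ 0 y = 0) (hr : ∀ x, μ x 0 = 0) {γ : V → V} (hγ : ∀ x, γ x = 0) (d : V → V) :
    (∀ x y, d (μ x y) = μ (d x) (γ y) + μ (γ x) (d y)) ↔ ∀ x y, d (μ x y) = 0 := by
  simp only [hγ, hl, hr, add_zero]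

lemma al19_be19 (x : Fin 3 → ℂ) : al19 (be19 x) = 0 := by
  simp [al19, be19]

lemma smul_D19a_add_smul_D19b_apply (a b : ℂ) (x : Fin 3 → ℂ) :
    (a • D19a + b • D19b) x = ![0, a * x 1, b * x 2] := by
  ext j
  fin_cases j <;> simp [D19a, D19b]

lemma eq_smul_D19a_add_smul_D19b (d : (Fin 3 → ℂ) →ₗ[ℂ] (Fin 3 → ℂ))
    (hα : ∀ x, d (al19 x) = al19 (d x)) (hβ : ∀ x, d (be19 x) = be19 (d x))
    (h₀ : d (Pi.single 0 1) = 0) :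
    d = d (Pi.single 1 1) 1 • D19a + d (Pi.single 2 1) 2 • D19b := by
  have h₁ : d (Pi.single 1 1) = Pi.single 1 (d (Pi.single 1 1) 1) := by
    simpa [al19] using hα (Pi.single 1 1)
  have h₂ : d (Pi.single 2 1) = Pi.single 2 (d (Pi.single 2 1) 2) := by
    simpa [be19] using hβ (Pi.single 2 1)
  refine (Pi.basisFun ℂ (Fin 3)).ext fun i => ?_
  rw [Pi.basisFun_apply, smul_D19a_add_smul_D19b_apply]
  fin_cases i
  · show d (Pi.single 0 1) = _
    rw [h₀]; ext j; fin_cases j <;> simp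
  · show d (Pi.single 1 1) = _
    conv_lhs => rw [h₁]
    ext j; fin_cases j <;> simp
  · show d (Pi.single 2 1) = _
    conv_lhs => rw [h₂]
    ext j; fin_cases j <;> simp

lemma map_single_zero_of_forall_map_m19_eq_zero (d : (Fin 3 → ℂ) →ₗ[ℂ] (Fin 3 → ℂ))
    (hm : ∀ x y, d (m19 x y) = 0) : d (Pi.single 0 1) = 0 := by
  simpa [m19] using hm (Pi.single 0 1) (Pi.single 0 1)

section Diagonal

variable (a b : ℂ)

lemma smul_D19a_add_smul_D19b_single_zero (c : ℂ) :
    (a • D19a + b • D19b) (Pi.single 0 c) = 0 := by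
  rw [smul_D19a_add_smul_D19b_apply]
  ext j; fin_cases j <;> simp

lemma smul_D19a_add_smul_D19b_al19 (x : Fin 3 → ℂ) :
    (a • D19a + b • D19b) (al19 x) = al19 ((a • D19a + b • D19b) x) := by
  simp only [smul_D19a_add_smul_D19b_apply, al19]
  ext j; fin_cases j <;> simp

lemma smul_D19a_add_smul_D19b_be19 (x : Fin 3 → ℂ) :
    (a • D19a + b • D19b) (be19 x) = be19 ((a • D19a + b • D19b) x) := by
  simp only [smul_D19a_add_smul_D19b_apply, be19]
  ext j; fin_cases j <;> simp

end Diagonal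

lemma linearIndependent_D19a_D19b : LinearIndependent ℂ ![D19a, D19b] := by
  refine LinearIndependent.pair_iff.mpr fun s t h => ⟨?_, ?_⟩
  · simpa [D19a, D19b] using congrFun (LinearMap.congr_fun h (Pi.single 1 1)) 1
  · simpa [D19a, D19b] using congrFun (LinearMap.congr_fun h (Pi.single 2 1)) 2

theorem stmt19 :
    (∀ d : (Fin 3 → ℂ) →ₗ[ℂ] (Fin 3 → ℂ),
      ((∀ x, d (al19 x) = al19 (d x)) ∧ (∀ x, d (be19 x) = be19 (d x)) ∧
       (∀ x y, d (l19 x y) = l19 (d x) (al19 (be19 y)) + l19 (al19 (be19 x)) (d y)) ∧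
       (∀ x y, d (r19 x y) = r19 (d x) (al19 (be19 y)) + r19 (al19 (be19 x)) (d y)) ∧
       (∀ x y, d (m19 x y) = m19 (d x) (al19 (be19 y)) + m19 (al19 (be19 x)) (d y)))
      ↔ ∃ a b : ℂ, d = a • D19a + b • D19b) ∧
    LinearIndependent ℂ ![D19a, D19b] := by
  have reduce := fun μ hl hr (d : (Fin 3 → ℂ) →ₗ[ℂ] (Fin 3 → ℂ)) =>
    derivation_identity_iff_of_eq_zero μ hl hr al19_be19 d
  have hl := reduce l19 (by simp [l19]) (by simp [l19])
  have hr := reduce r19 (by simp [r19]) (by simp [r19])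
  have hm := reduce m19 (by simp [m19]) (by simp [m19])
  refine ⟨fun d => ⟨?_, ?_⟩, linearIndependent_D19a_D19b⟩
  · rintro ⟨hα, hβ, -, -, hmd⟩
    have h₀ := map_single_zero_of_forall_map_m19_eq_zero d ((hm d).mp hmd)
    exact ⟨_, _, eq_smul_D19a_add_smul_D19b d hα hβ h₀⟩
  · rintro ⟨a, b, rfl⟩
    have kills := smul_D19a_add_smul_D19b_single_zero a b
    exact ⟨smul_D19a_add_smul_D19b_al19 a b, smul_D19a_add_smul_D19b_be19 a b,
      (hl _).mpr fun _ _ => kills _, (hr _).mpr fun _ _ => kills _,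
      (hm _).mpr fun _ _ => kills _⟩
end
end
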